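/- Let (X, w) be a weighted pure d-dimensional simplicial complex whose 1-skeleton is a γ-spectral expander, let 1 ≤ k ≤ d, and let f ∈ C^k(X; ℝ) with ⟨f, 1⟩ = 0 (a 0-level cochain with respect to localization). Then ‖d_0^* ⋯ d_{k−1}^* f‖² ≤ (1 − (k/(k+1))(1 − γ)) ‖f‖². -/

import Mathlib

/-!
Weighted pure simplicial complexes, links, cochains, signless differentials
and high dimensional random walk operators.

Conventions: faces are `Finset`s of vertices. A cochain "of dimension `k`"
(an element of `C^k(X;ℝ)`) is represented by a function `Finset V → ℝ`
evaluated on faces of **cardinality** `c = k + 1`; all operators are indexed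
by cardinality.
-/

open Finset

namespace HDRW

noncomputable section

variable {V : Type*} [DecidableEq V] [Fintype V]

/-- A weighted family of faces (the data of a weighted complex or of a link). -/
structure WFam (V : Type*) [DecidableEq V] [Fintype V] where
  faces : Finset (Finset V)
  w : Finset V → ℝ

namespace WFam

/-- The faces of cardinality `c` (i.e. of dimension `c - 1`). -/
def dimFaces (Y : WFam V) (c : ℕ) : Finset (Finset V) :=
  Y.faces.filter fun σ => σ.card = c

/-- The link of a face `τ`, as a weighted family; the weights are
`w_τ(s) = w (s ∪ τ) / (C(|s| + |τ|, |τ|) * w τ)`. -/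
def link (Y : WFam V) (τ : Finset V) : WFam V where
  faces := Finset.univ.powerset.filter fun s => Disjoint s τ ∧ s ∪ τ ∈ Y.faces
  w := fun s => Y.w (s ∪ τ) / (((s.card + τ.card).choose τ.card : ℝ) * Y.w τ)

/-- The inner product of two `c`-cochains: `⟨f, g⟩ = Σ_{σ} w σ * f σ * g σ`. -/
def inner (Y : WFam V) (c : ℕ) (f g : Finset V → ℝ) : ℝ :=
  ∑ σ ∈ Y.dimFaces c, Y.w σ * (f σ * g σ)

/-- The squared norm `‖f‖² = ⟨f, f⟩` of a `c`-cochain. -/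
def norm2 (Y : WFam V) (c : ℕ) (f : Finset V → ℝ) : ℝ := Y.inner c f f

end WFam

/-- The signless differential `d` from cochains on faces of cardinality `c`
(dimension `c-1`) to cochains on faces of cardinality `c+1`:
`(d f)(σ) = (1/(c+1)) Σ_{τ ⊆ σ, |τ| = c} f τ`. -/
def sDiff (c : ℕ) (f : Finset V → ℝ) : Finset V → ℝ :=
  fun σ => ((c : ℝ) + 1)⁻¹ * ∑ τ ∈ σ.powerset.filter (fun τ => τ.card = c), f τ

/-- Iterated signless differential `C_a → C_{a+n}` (in cardinality indexing),
i.e. `d_{a+n-2} ⋯ d_{a-1}` in dimension indexing. -/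
def sDiffIter (a : ℕ) : ℕ → (Finset V → ℝ) → (Finset V → ℝ)
  | 0, f => f
  | n + 1, f => sDiff (a + n) (sDiffIter a n f)

namespace WFam

/-- The adjoint `d^*` of the signless differential, from cochains on faces of
cardinality `c+1` to cochains on faces of cardinality `c`; it is given by the
explicit formula `(d^* f)(τ) = Σ_{σ ∈ X(c), τ ⊆ σ} w_τ(σ ∖ τ) * f σ` (a sum
over the cardinality-`(c+1)` faces containing `τ`). -/
def sAdj (Y : WFam V) (c : ℕ) (f : Finset V → ℝ) : Finset V → ℝ :=
  fun τ => ∑ σ ∈ (Y.dimFaces (c + 1)).filter (fun σ => τ ⊆ σ),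
    (Y.link τ).w (σ \ τ) * f σ

/-- Iterated adjoint of the signless differential, `C_{a+n} → C_a`
(in cardinality indexing), i.e. `d_{a-1}^* ⋯ d_{a+n-2}^*`. -/
def sAdjIter (Y : WFam V) : ℕ → ℕ → (Finset V → ℝ) → (Finset V → ℝ)
  | _, 0, f => f
  | a, n + 1, f => Y.sAdj a (sAdjIter Y (a + 1) n f)

/-- The non-lazy up-down random walk operator `M⁺` on cochains of cardinality
`c` (dimension `k = c-1`): `(M⁺ f)(σ) = (1/(k+1)) Σ_{τ, σ ∪ τ ∈ X(k+1)} w_σ(τ∖σ) f τ`. -/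
def nonLazy (Y : WFam V) (c : ℕ) (f : Finset V → ℝ) : Finset V → ℝ :=
  fun σ => (c : ℝ)⁻¹ *
    ∑ τ ∈ (Y.dimFaces c).filter (fun τ => σ ∪ τ ∈ Y.dimFaces (c + 1)),
      (Y.link σ).w (τ \ σ) * f τ

/-- The (lazy) up-down random walk operator `U` on cochains of cardinality `c`
(dimension `k = c-1`):
`(U f)(σ) = (1/(k+2)) f σ + (1/(k+2)) Σ_{τ, σ ∪ τ ∈ X(k+1)} w_σ(τ∖σ) f τ`. -/
def upDown (Y : WFam V) (c : ℕ) (f : Finset V → ℝ) : Finset V → ℝ :=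
  fun σ => ((c : ℝ) + 1)⁻¹ * f σ + ((c : ℝ) + 1)⁻¹ *
    ∑ τ ∈ (Y.dimFaces c).filter (fun τ => σ ∪ τ ∈ Y.dimFaces (c + 1)),
      (Y.link σ).w (τ \ σ) * f τ

/-- The down-up random walk operator `D` on cochains of cardinality `c`
(dimension `k = c-1`). -/
def downUp (Y : WFam V) (c : ℕ) (f : Finset V → ℝ) : Finset V → ℝ :=
  fun σ => (c : ℝ)⁻¹ *
      (∑ τ' ∈ σ.powerset.filter (fun τ' => τ'.card = c - 1), (Y.link τ').w (σ \ τ')) * f σ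
    + (c : ℝ)⁻¹ *
      ∑ τ ∈ (Y.dimFaces c).filter (fun τ => τ ≠ σ ∧ σ ∩ τ ∈ Y.dimFaces (c - 1)),
        (Y.link (σ ∩ τ)).w (τ \ σ) * f τ

/-- The `i`-down-up operator `D^i = d ⋯ d d^* ⋯ d^*` (going down `i+1` steps and
back up) on cochains of cardinality `c` (dimension `k = c-1`); in dimension
indexing this is `D_k^i = d_{k-1} ⋯ d_{k-i-1} d_{k-i-1}^* ⋯ d_{k-1}^*`. -/
def downUpIter (Y : WFam V) (c i : ℕ) (f : Finset V → ℝ) : Finset V → ℝ :=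
  sDiffIter (c - (i + 1)) (i + 1) (Y.sAdjIter (c - (i + 1)) (i + 1) f)

/-- `Y` (through its 1-skeleton) is a `γ`-(one sided) spectral expander:
every function on the vertices orthogonal to the constants has Rayleigh
quotient of the non-lazy random walk at most `γ` (Rayleigh characterization of
"the second largest eigenvalue of `M₀⁺` is at most `γ`"). -/
def isExpander (Y : WFam V) (γ : ℝ) : Prop :=
  ∀ f : Finset V → ℝ, Y.inner 1 f (fun _ => 1) = 0 →
    Y.inner 1 (Y.nonLazy 1 f) f ≤ γ * Y.norm2 1 f

/-- `Y` (through its 1-skeleton) is connected: the eigenvalue `1` of the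
non-lazy random walk `M₀⁺` has multiplicity one, i.e. every nonzero function on
the vertices orthogonal to the constants has Rayleigh quotient strictly
less than `1`. -/
def isConnected (Y : WFam V) : Prop :=
  ∀ f : Finset V → ℝ, Y.inner 1 f (fun _ => 1) = 0 → Y.norm2 1 f ≠ 0 →
    Y.inner 1 (Y.nonLazy 1 f) f < Y.norm2 1 f

/-- `f` is an `i`-level cochain of cardinality `c` (dimension `k = c-1`) with
respect to localization: for every face `σ` of cardinality `i` (i.e. of
dimension `i-1`), the localization `f_σ` is orthogonal to the constants in the
link `X_σ`. -/
def isLevel (Y : WFam V) (i c : ℕ) (f : Finset V → ℝ) : Prop :=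
  ∀ σ ∈ Y.dimFaces i,
    (Y.link σ).inner (c - i) (fun s => f (σ ∪ s)) (fun _ => 1) = 0

/-- `f` is a proper `i`-level cochain of cardinality `c`: it is an `i`-level
cochain which is in addition orthogonal to every `(i+1)`-level cochain. -/
def isProperLevel (Y : WFam V) (i c : ℕ) (f : Finset V → ℝ) : Prop :=
  Y.isLevel i c f ∧ ∀ g : Finset V → ℝ, Y.isLevel (i + 1) c g → Y.inner c f g = 0

end WFam

/-- The coboundary operator on oriented cochains (represented by their values
on the increasing ordering of each face, with respect to a linear order on the
vertices): `(δ f)(σ) = Σ_{j} (-1)^j f(σ ∖ {j-th smallest element of σ})`. -/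
def coboundary {V : Type*} [LinearOrder V] [Fintype V] (f : Finset V → ℝ) :
    Finset V → ℝ :=
  fun σ => ∑ v ∈ σ, (-1 : ℝ) ^ (σ.filter (fun u => u < v)).card * f (σ.erase v)

/-- A weighted pure `d`-dimensional simplicial complex: a downward closed
family of faces, each contained in a face of cardinality `d+1`
(dimension `d`), together with a weight function `w : X → (0, 1]` summing to
`1` on the top faces and satisfying the averaging recurrence on lower faces. -/
structure WSC (V : Type*) [DecidableEq V] [Fintype V] (d : ℕ) extends WFam V where
  empty_mem : ∅ ∈ faces
  down_closed : ∀ ⦃σ⦄, σ ∈ faces → ∀ ⦃τ⦄, τ ⊆ σ → τ ∈ faces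
  isPure : ∀ σ ∈ faces, ∃ σ' ∈ faces, σ ⊆ σ' ∧ σ'.card = d + 1
  w_pos : ∀ σ ∈ faces, 0 < w σ
  w_le_one : ∀ σ ∈ faces, w σ ≤ 1
  w_sum_top : ∑ σ ∈ faces.filter (fun σ => σ.card = d + 1), w σ = 1
  w_down : ∀ τ ∈ faces, τ.card ≤ d →
    w τ = (((d + 1).choose τ.card : ℝ))⁻¹ *
      ∑ σ ∈ faces.filter (fun σ => σ.card = d + 1 ∧ τ ⊆ σ), w σ


variable {d : ℕ}

/-!
Write `h = d_0^* ⋯ d_{k-1}^* f` and `D = d_{k-1} ⋯ d_0`. By adjointness and Cauchy–Schwarz,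
`‖h‖⁴ = ⟨D h, f⟩² ≤ ‖D h‖² ‖f‖²`. The value `(D h)(σ)` is the average of `h` over the vertices
of `σ`, so expanding `‖D h‖²` and counting the `k`-faces through a vertex or an edge gives
`(k+1) ‖D h‖² = ‖h‖² + k ⟨M₀⁺ h, h⟩ ≤ (1 + kγ) ‖h‖²`, the inequality because `h ⊥ 1`.
Hence `‖h‖² ≤ (1 + kγ)/(k+1) ‖f‖²`. The same identity for a nonzero `h ⊥ 1` shows `1 + kγ ≥ 0`,
which settles the case `h = 0`.
-/

lemma sum_filter_comm {α β M : Type*} [AddCommMonoid M] (A : Finset α) (B : Finset β)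
    (p : α → β → Prop) [∀ a b, Decidable (p a b)] (F : α → β → M) :
    ∑ a ∈ A, ∑ b ∈ B.filter (p a ·), F a b = ∑ b ∈ B, ∑ a ∈ A.filter (p · b), F a b := by
  simp only [Finset.sum_filter]
  exact Finset.sum_comm

omit [Fintype V] in
lemma card_filter_supset_card_eq_choose {τ t : Finset V} (hτt : τ ⊆ t) {c : ℕ}
    (hc : τ.card ≤ c) :
    (t.powerset.filter fun σ => σ.card = c ∧ τ ⊆ σ).card
      = (t.card - τ.card).choose (c - τ.card) := by
  rw [← card_sdiff_of_subset hτt, ← card_powersetCard]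
  refine card_nbij' (· \ τ) (· ∪ τ) ?_ ?_ ?_ ?_
  · intro σ hσ
    simp only [mem_coe, mem_filter, mem_powerset] at hσ
    simp only [mem_coe, mem_powersetCard]
    exact ⟨sdiff_subset_sdiff hσ.1 le_rfl, by rw [card_sdiff_of_subset hσ.2.2, hσ.2.1]⟩
  · intro s hs
    simp only [mem_coe, mem_powersetCard] at hs
    have hdisj : Disjoint s τ := disjoint_of_subset_left hs.1 sdiff_disjoint
    simp only [mem_coe, mem_filter, mem_powerset]
    refine ⟨union_subset (hs.1.trans sdiff_subset) hτt, ?_, subset_union_right⟩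
    rw [card_union_of_disjoint hdisj, hs.2]
    omega
  · intro σ hσ
    simp only [mem_coe, mem_filter] at hσ
    exact sdiff_union_of_subset hσ.2.2
  · intro s hs
    simp only [mem_coe, mem_powersetCard] at hs
    exact union_sdiff_cancel_right (disjoint_of_subset_left hs.1 sdiff_disjoint)

omit [Fintype V] in
lemma sDiffIter_apply (a n : ℕ) (h : Finset V → ℝ) {σ : Finset V} (hσ : σ.card = a + n) :
    sDiffIter a n h σ = (((a + n).choose a : ℕ) : ℝ)⁻¹ * ∑ τ ∈ σ.powerset with τ.card = a, h τ := by
  induction n generalizing σ with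
  | zero =>
    rw [Nat.add_zero] at hσ ⊢
    rw [← powersetCard_eq_filter, ← hσ, powersetCard_self]
    simp [sDiffIter]
  | succ n ih =>
    have hcount : ∀ τ ∈ σ.powerset.filter (·.card = a),
        ((σ.powerset.filter (·.card = a + n)).filter (τ ⊆ ·)).card = n + 1 := by
      intro τ hτ
      rw [mem_filter, mem_powerset] at hτ
      rw [filter_filter, card_filter_supset_card_eq_choose hτ.1 (by omega), hσ, hτ.2,
        show a + (n + 1) - a = n + 1 by omega, show a + n - a = n by omega,
        Nat.choose_succ_self_right]
    have hchoose : ((a + n).choose a : ℝ) * (a + n + 1) = (a + n + 1).choose a * (n + 1) := by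
      have := Nat.choose_mul_succ_eq (a + n) a
      rw [show a + n + 1 - a = n + 1 by omega] at this
      exact_mod_cast this
    have hne : ((a + n).choose a : ℝ) ≠ 0 := Nat.cast_ne_zero.2 (Nat.choose_pos (by omega)).ne'
    have hne' : ((a + (n + 1)).choose a : ℝ) ≠ 0 :=
      Nat.cast_ne_zero.2 (Nat.choose_pos (by omega)).ne'
    calc sDiffIter a (n + 1) h σ
        = ((a + n : ℕ) + 1 : ℝ)⁻¹ * ∑ τ' ∈ σ.powerset with τ'.card = a + n,
            (((a + n).choose a : ℕ) : ℝ)⁻¹ *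
              ∑ τ ∈ (σ.powerset.filter (·.card = a)).filter (· ⊆ τ'), h τ := by
          refine congrArg _ (sum_congr rfl fun τ' hτ' => ?_)
          rw [mem_filter, mem_powerset] at hτ'
          rw [ih hτ'.2]
          congr 1
          refine sum_congr ?_ fun _ _ => rfl
          ext τ
          simp only [mem_filter, mem_powerset]
          exact ⟨fun ⟨h1, h2⟩ => ⟨⟨h1.trans hτ'.1, h2⟩, h1⟩, fun ⟨⟨_, h2⟩, h1⟩ => ⟨h1, h2⟩⟩
      _ = ((a + n : ℕ) + 1 : ℝ)⁻¹ * (((a + n).choose a : ℕ) : ℝ)⁻¹ *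
            ∑ τ ∈ σ.powerset with τ.card = a, (n + 1) * h τ := by
          rw [← mul_sum, sum_filter_comm, mul_assoc]
          refine congrArg _ (congrArg _ (sum_congr rfl fun τ hτ => ?_))
          rw [sum_const, hcount τ hτ, nsmul_eq_mul]
          push_cast
          ring
      _ = _ := by
          rw [← mul_sum, ← mul_assoc]
          congr 1
          field_simp
          push_cast
          linear_combination -hchoose

namespace WFam

variable (Y : WFam V)

lemma inner_comm (c : ℕ) (f g : Finset V → ℝ) : Y.inner c f g = Y.inner c g f :=
  sum_congr rfl fun _ _ => by ring

lemma link_w_sdiff {τ σ : Finset V} (hτσ : τ ⊆ σ) :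
    (Y.link τ).w (σ \ τ) = Y.w σ / ((σ.card.choose τ.card : ℕ) * Y.w τ) := by
  simp only [link]
  rw [sdiff_union_of_subset hτσ, card_sdiff_add_card_eq_card hτσ]

end WFam

namespace WSC

variable (X : WSC V d)

lemma mem_dimFaces {σ : Finset V} {c : ℕ} : σ ∈ X.dimFaces c ↔ σ ∈ X.faces ∧ σ.card = c :=
  mem_filter

lemma powerset_filter_card_eq {σ : Finset V} (hσ : σ ∈ X.faces) (c : ℕ) :
    σ.powerset.filter (·.card = c) = (X.dimFaces c).filter (· ⊆ σ) := by
  ext τ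
  simp only [mem_filter, mem_powerset, mem_dimFaces]
  exact ⟨fun ⟨hτσ, hτc⟩ => ⟨⟨X.down_closed hσ hτσ, hτc⟩, hτσ⟩, fun ⟨⟨_, hτc⟩, hτσ⟩ => ⟨hτσ, hτc⟩⟩

lemma choose_mul_w_eq_sum_top {τ : Finset V} (hτ : τ ∈ X.faces) (hτd : τ.card ≤ d + 1) :
    ((d + 1).choose τ.card : ℝ) * X.w τ = ∑ t ∈ X.dimFaces (d + 1) with τ ⊆ t, X.w t := by
  rw [WFam.dimFaces, filter_filter]
  rcases hτd.lt_or_eq with hlt | heq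
  · rw [X.w_down τ hτ (by omega),
      mul_inv_cancel_left₀ (Nat.cast_ne_zero.2 (Nat.choose_pos (by omega)).ne')]
  · have : (X.faces.filter fun t => t.card = d + 1 ∧ τ ⊆ t) = {τ} := by
      ext t
      simp only [mem_filter, mem_singleton]
      constructor
      · rintro ⟨-, ht, hτt⟩
        exact (eq_of_subset_of_card_le hτt (by omega)).symm
      · rintro rfl
        exact ⟨hτ, heq, subset_rfl⟩
    simp [this, heq]

lemma card_dimFaces_between {τ t : Finset V} (ht : t ∈ X.faces) (hτt : τ ⊆ t) {c : ℕ}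
    (hc : τ.card ≤ c) :
    (((X.dimFaces c).filter (τ ⊆ ·)).filter (· ⊆ t)).card
      = (t.card - τ.card).choose (c - τ.card) := by
  rw [← card_filter_supset_card_eq_choose hτt hc]
  congr 1
  ext σ
  simp only [mem_filter, mem_powerset, mem_dimFaces]
  exact ⟨fun ⟨⟨⟨_, hσc⟩, hτσ⟩, hσt⟩ => ⟨hσt, hσc, hτσ⟩,
    fun ⟨hσt, hσc, hτσ⟩ => ⟨⟨⟨X.down_closed ht hσt, hσc⟩, hτσ⟩, hσt⟩⟩

lemma sum_w_supset_of_mem {τ : Finset V} (hτ : τ ∈ X.faces) {c : ℕ} (hτc : τ.card ≤ c)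
    (hc : c ≤ d + 1) :
    ∑ σ ∈ X.dimFaces c with τ ⊆ σ, X.w σ = (c.choose τ.card : ℝ) * X.w τ := by
  have hne : ((d + 1).choose c : ℝ) ≠ 0 := Nat.cast_ne_zero.2 (Nat.choose_pos hc).ne'
  refine mul_left_cancel₀ hne ?_
  have hchoose : ((d + 1).choose c : ℝ) * c.choose τ.card
      = (d + 1 - τ.card).choose (c - τ.card) * (d + 1).choose τ.card := by
    rw [mul_comm _ ((d + 1).choose τ.card : ℝ)]
    exact_mod_cast Nat.choose_mul hτc
  calc ((d + 1).choose c : ℝ) * ∑ σ ∈ X.dimFaces c with τ ⊆ σ, X.w σ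
      = ∑ σ ∈ X.dimFaces c with τ ⊆ σ, ∑ t ∈ X.dimFaces (d + 1) with σ ⊆ t, X.w t := by
        rw [mul_sum]
        refine sum_congr rfl fun σ hσ => ?_
        obtain ⟨hσX, hσc⟩ := X.mem_dimFaces.1 (mem_filter.1 hσ).1
        rw [← X.choose_mul_w_eq_sum_top hσX (hσc ▸ hc), hσc]
    _ = ∑ t ∈ X.dimFaces (d + 1) with τ ⊆ t,
          ((d + 1 - τ.card).choose (c - τ.card) : ℝ) * X.w t := by
        rw [sum_filter_comm, sum_filter]
        refine sum_congr rfl fun t ht => ?_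
        obtain ⟨htX, htc⟩ := (X.mem_dimFaces).1 ht
        split_ifs with hτt
        · rw [sum_const, X.card_dimFaces_between htX hτt hτc, htc, nsmul_eq_mul]
        · refine sum_eq_zero fun σ hσ => absurd ?_ hτt
          rw [mem_filter, mem_filter] at hσ
          exact hσ.1.2.trans hσ.2
    _ = ((d + 1).choose c : ℝ) * (c.choose τ.card * X.w τ) := by
        rw [← mul_sum, ← X.choose_mul_w_eq_sum_top hτ (hτc.trans hc), ← mul_assoc, ← mul_assoc,
          hchoose]

lemma sum_w_supset (τ : Finset V) {c : ℕ} (hc : c ≤ d + 1) :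
    ∑ σ ∈ X.dimFaces c with τ ⊆ σ, X.w σ
      = if τ ∈ X.faces then (c.choose τ.card : ℝ) * X.w τ else 0 := by
  by_cases hτc : τ.card ≤ c
  · split_ifs with hτ
    · exact X.sum_w_supset_of_mem hτ hτc hc
    · refine sum_eq_zero fun σ hσ => absurd ?_ hτ
      obtain ⟨hσ, hτσ⟩ := mem_filter.1 hσ
      exact X.down_closed (X.mem_dimFaces.1 hσ).1 hτσ
  · rw [Nat.choose_eq_zero_of_lt (not_le.1 hτc)]
    refine (sum_eq_zero fun σ hσ => absurd ?_ hτc).trans (by simp)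
    obtain ⟨hσ, hτσ⟩ := mem_filter.1 hσ
    exact (X.mem_dimFaces.1 hσ).2 ▸ card_le_card hτσ

lemma norm2_nonneg (c : ℕ) (u : Finset V → ℝ) : 0 ≤ X.norm2 c u :=
  sum_nonneg fun σ hσ => mul_nonneg (X.w_pos σ (X.mem_dimFaces.1 hσ).1).le (mul_self_nonneg _)

lemma norm2_pos {c : ℕ} {u : Finset V → ℝ} {σ : Finset V} (hσ : σ ∈ X.dimFaces c)
    (hu : u σ ≠ 0) : 0 < X.norm2 c u :=
  (mul_pos (X.w_pos σ (X.mem_dimFaces.1 hσ).1) (mul_self_pos.2 hu)).trans_le <|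
    single_le_sum (f := fun σ => X.w σ * (u σ * u σ))
      (fun τ hτ => mul_nonneg (X.w_pos τ (X.mem_dimFaces.1 hτ).1).le (mul_self_nonneg _)) hσ

lemma inner_sq_le_norm2_mul_norm2 (c : ℕ) (u v : Finset V → ℝ) :
    X.inner c u v ^ 2 ≤ X.norm2 c u * X.norm2 c v :=
  sum_sq_le_sum_mul_sum_of_sq_le_mul _
    (fun σ hσ => mul_nonneg (X.w_pos σ (X.mem_dimFaces.1 hσ).1).le (mul_self_nonneg _))
    (fun σ hσ => mul_nonneg (X.w_pos σ (X.mem_dimFaces.1 hσ).1).le (mul_self_nonneg _))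
    (fun σ _ => le_of_eq (by ring))

lemma inner_sDiff (c : ℕ) (u g : Finset V → ℝ) :
    X.inner (c + 1) (sDiff c u) g = X.inner c u (X.sAdj c g) := by
  calc X.inner (c + 1) (sDiff c u) g
      = ∑ σ ∈ X.dimFaces (c + 1), ∑ τ ∈ (X.dimFaces c).filter (· ⊆ σ),
          X.w σ / (c + 1) * g σ * u τ := by
        refine sum_congr rfl fun σ hσ => ?_
        rw [sDiff, X.powerset_filter_card_eq (X.mem_dimFaces.1 hσ).1, mul_sum, sum_mul, mul_sum]
        exact sum_congr rfl fun _ _ => by ring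
    _ = ∑ τ ∈ X.dimFaces c, ∑ σ ∈ (X.dimFaces (c + 1)).filter (τ ⊆ ·),
          X.w τ * (u τ * ((X.link τ).w (σ \ τ) * g σ)) := by
        rw [sum_filter_comm]
        refine sum_congr rfl fun τ hτ => sum_congr rfl fun σ hσ => ?_
        obtain ⟨hσ, hτσ⟩ := mem_filter.1 hσ
        rw [X.link_w_sdiff hτσ, (X.mem_dimFaces.1 hσ).2, (X.mem_dimFaces.1 hτ).2,
          Nat.choose_succ_self_right]
        have := (X.w_pos τ (X.mem_dimFaces.1 hτ).1).ne'
        field_simp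
        push_cast
        ring
    _ = X.inner c u (X.sAdj c g) := by
        simp only [WFam.inner, WFam.sAdj, mul_sum]

lemma sAdjIter_succ' (a n : ℕ) (g : Finset V → ℝ) :
    X.sAdjIter a (n + 1) g = X.sAdjIter a n (X.sAdj (a + n) g) := by
  induction n generalizing a with
  | zero => rfl
  | succ n ih =>
    rw [WFam.sAdjIter, ih, Nat.add_right_comm a 1 n]
    rfl

lemma inner_sDiffIter (a n : ℕ) (u g : Finset V → ℝ) :
    X.inner (a + n) (sDiffIter a n u) g = X.inner a u (X.sAdjIter a n g) := by
  induction n generalizing g with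
  | zero => rfl
  | succ n ih => rw [sDiffIter, ← add_assoc, inner_sDiff, ih, sAdjIter_succ']

lemma inner_sAdjIter_one (a n : ℕ) (g : Finset V → ℝ) :
    X.inner a (X.sAdjIter a n g) (fun _ => 1) = X.inner (a + n) g (fun _ => 1) := by
  rw [X.inner_comm, ← inner_sDiffIter, X.inner_comm]
  refine sum_congr rfl fun σ hσ => ?_
  have hσc := (X.mem_dimFaces.1 hσ).2
  rw [sDiffIter_apply a n _ hσc, sum_const, ← powersetCard_eq_filter, card_powersetCard, hσc,
    nsmul_one, inv_mul_cancel₀ (Nat.cast_ne_zero.2 (Nat.choose_pos (by omega)).ne')]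

lemma inner_nonLazy_one (h : Finset V → ℝ) :
    X.inner 1 (X.nonLazy 1 h) h
      = ∑ ρ ∈ X.dimFaces 1, ∑ ρ' ∈ X.dimFaces 1 with ρ ∪ ρ' ∈ X.dimFaces 2,
          X.w (ρ ∪ ρ') * (h ρ * h ρ') / 2 := by
  refine sum_congr rfl fun ρ hρ => ?_
  obtain ⟨hρX, hρc⟩ := X.mem_dimFaces.1 hρ
  simp only [WFam.nonLazy, Nat.cast_one, inv_one, one_mul, sum_mul, mul_sum]
  refine sum_congr rfl fun ρ' hρ' => ?_
  have hcard : (ρ ∪ ρ').card = 2 := (X.mem_dimFaces.1 (mem_filter.1 hρ').2).2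
  rw [← union_sdiff_left, X.link_w_sdiff subset_union_left, hcard, hρc, Nat.choose_one_right]
  have := (X.w_pos ρ hρX).ne'
  field_simp
  ring

lemma sum_w_supset_union_of_card_one {ρ ρ' : Finset V} (hρ : ρ ∈ X.dimFaces 1)
    (hρ' : ρ' ∈ X.dimFaces 1) {c : ℕ} (hc : c ≤ d + 1) :
    ∑ σ ∈ X.dimFaces c with ρ ∪ ρ' ⊆ σ, X.w σ
      = (if ρ' = ρ then (c : ℝ) * X.w ρ else 0)
        + if ρ ∪ ρ' ∈ X.dimFaces 2 then (c.choose 2 : ℝ) * X.w (ρ ∪ ρ') else 0 := by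
  obtain ⟨hρX, hρc⟩ := X.mem_dimFaces.1 hρ
  obtain ⟨u, rfl⟩ := card_eq_one.1 hρc
  obtain ⟨v, rfl⟩ := card_eq_one.1 (X.mem_dimFaces.1 hρ').2
  rw [X.sum_w_supset _ hc]
  by_cases huv : v = u
  · subst huv
    simp [hρX, X.mem_dimFaces]
  · simp [huv, card_pair (Ne.symm huv), X.mem_dimFaces]

lemma sum_w_mul_sq_sum_vertices {c : ℕ} (hc : c ≤ d + 1) (h : Finset V → ℝ) :
    ∑ σ ∈ X.dimFaces c, X.w σ *
        ((∑ ρ ∈ X.dimFaces 1 with ρ ⊆ σ, h ρ) * ∑ ρ ∈ X.dimFaces 1 with ρ ⊆ σ, h ρ)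
      = c * X.norm2 1 h + (c.choose 2 : ℝ) * 2 * X.inner 1 (X.nonLazy 1 h) h := by
  calc ∑ σ ∈ X.dimFaces c, X.w σ *
        ((∑ ρ ∈ X.dimFaces 1 with ρ ⊆ σ, h ρ) * ∑ ρ ∈ X.dimFaces 1 with ρ ⊆ σ, h ρ)
      = ∑ σ ∈ X.dimFaces c, ∑ ρ ∈ X.dimFaces 1, ∑ ρ' ∈ X.dimFaces 1,
          if ρ ∪ ρ' ⊆ σ then h ρ * h ρ' * X.w σ else 0 := by
        refine sum_congr rfl fun σ _ => ?_
        rw [sum_filter, sum_mul_sum, mul_sum]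
        refine sum_congr rfl fun ρ _ => ?_
        rw [mul_sum]
        refine sum_congr rfl fun ρ' _ => ?_
        simp only [ite_zero_mul_ite_zero, union_subset_iff]
        split_ifs <;> ring
    _ = ∑ ρ ∈ X.dimFaces 1, ∑ ρ' ∈ X.dimFaces 1,
          h ρ * h ρ' * ∑ σ ∈ X.dimFaces c with ρ ∪ ρ' ⊆ σ, X.w σ := by
        rw [sum_comm]
        refine sum_congr rfl fun ρ _ => ?_
        rw [sum_comm]
        exact sum_congr rfl fun ρ' _ => by simp only [sum_filter, mul_sum, mul_ite, mul_zero]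
    _ = _ := by
        rw [X.inner_nonLazy_one, WFam.norm2, WFam.inner, mul_sum, mul_sum, ← sum_add_distrib]
        refine sum_congr rfl fun ρ hρ => ?_
        rw [sum_congr rfl fun ρ' hρ' => by rw [X.sum_w_supset_union_of_card_one hρ hρ' hc]]
        simp only [mul_add, sum_add_distrib, mul_ite, mul_zero, sum_ite_eq', if_pos hρ, sum_filter,
          mul_sum]
        congr 1
        · ring
        · exact sum_congr rfl fun _ _ => by split_ifs <;> ring

lemma sDiffIter_one_apply (k : ℕ) (h : Finset V → ℝ) {σ : Finset V}
    (hσ : σ ∈ X.dimFaces (1 + k)) :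
    sDiffIter 1 k h σ = ((k : ℝ) + 1)⁻¹ * ∑ ρ ∈ X.dimFaces 1 with ρ ⊆ σ, h ρ := by
  obtain ⟨hσX, hσc⟩ := X.mem_dimFaces.1 hσ
  rw [sDiffIter_apply 1 k h hσc, X.powerset_filter_card_eq hσX, Nat.choose_one_right]
  push_cast
  rw [add_comm]

lemma norm2_sDiffIter_one {k : ℕ} (hk : k ≤ d) (h : Finset V → ℝ) :
    ((k : ℝ) + 1) * X.norm2 (1 + k) (sDiffIter 1 k h)
      = X.norm2 1 h + k * X.inner 1 (X.nonLazy 1 h) h := by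
  have hchoose : ((1 + k).choose 2 : ℝ) * 2 = (k + 1) * k := by
    rw [Nat.cast_choose_two]
    push_cast
    ring
  have hsum := X.sum_w_mul_sq_sum_vertices (by omega : 1 + k ≤ d + 1) h
  rw [hchoose] at hsum
  have hnorm : X.norm2 (1 + k) (sDiffIter 1 k h) = ((k : ℝ) + 1)⁻¹ * ((k : ℝ) + 1)⁻¹ *
      ∑ σ ∈ X.dimFaces (1 + k), X.w σ *
        ((∑ ρ ∈ X.dimFaces 1 with ρ ⊆ σ, h ρ) * ∑ ρ ∈ X.dimFaces 1 with ρ ⊆ σ, h ρ) := by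
    rw [WFam.norm2, WFam.inner, mul_sum]
    exact sum_congr rfl fun σ hσ => by rw [X.sDiffIter_one_apply k h hσ]; ring
  rw [hnorm, hsum]
  push_cast
  field_simp
  ring

lemma exists_inner_one_eq_zero_norm2_pos (hd : 1 ≤ d) :
    ∃ h : Finset V → ℝ, X.inner 1 h (fun _ => 1) = 0 ∧ 0 < X.norm2 1 h := by
  obtain ⟨T, hT, -, hTc⟩ := X.isPure ∅ X.empty_mem
  obtain ⟨u, hu, v, hv, huv⟩ := one_lt_card.1 (by omega : 1 < T.card)
  have hvert : ∀ x ∈ T, {x} ∈ X.dimFaces 1 := fun x hx =>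
    X.mem_dimFaces.2 ⟨X.down_closed hT (singleton_subset_iff.2 hx), card_singleton x⟩
  have hne : ({u} : Finset V) ≠ {v} := by simpa using huv
  refine ⟨fun s => (if s = {u} then X.w {v} else 0) - if s = {v} then X.w {u} else 0, ?_,
    X.norm2_pos (hvert u hu) ?_⟩
  · simp only [WFam.inner, mul_one, mul_sub, mul_ite, mul_zero, sum_sub_distrib, sum_ite_eq',
      hvert u hu, hvert v hv, if_true]
    ring
  · simpa [hne] using (X.w_pos _ (X.mem_dimFaces.1 (hvert v hv)).1).ne'

variable {X}

lemma norm2_sDiffIter_one_le {γ : ℝ} (hexp : X.isExpander γ) {k : ℕ} (hk : k ≤ d)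
    {h : Finset V → ℝ} (hh : X.inner 1 h (fun _ => 1) = 0) :
    ((k : ℝ) + 1) * X.norm2 (1 + k) (sDiffIter 1 k h) ≤ (1 + k * γ) * X.norm2 1 h :=
  calc ((k : ℝ) + 1) * X.norm2 (1 + k) (sDiffIter 1 k h)
      = X.norm2 1 h + k * X.inner 1 (X.nonLazy 1 h) h := X.norm2_sDiffIter_one hk h
    _ ≤ X.norm2 1 h + k * (γ * X.norm2 1 h) := by gcongr; exact hexp h hh
    _ = (1 + k * γ) * X.norm2 1 h := by ring

lemma one_add_mul_nonneg_of_isExpander {γ : ℝ} (hexp : X.isExpander γ) {k : ℕ} (hk : k ≤ d) :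
    0 ≤ 1 + k * γ := by
  rcases Nat.eq_zero_or_pos k with rfl | hk0
  · simp
  obtain ⟨h, hh, hpos⟩ := X.exists_inner_one_eq_zero_norm2_pos (by omega)
  have hD := norm2_sDiffIter_one_le hexp hk hh
  exact nonneg_of_mul_nonneg_left ((mul_nonneg (by positivity) (X.norm2_nonneg _ _)).trans hD) hpos

end WSC

theorem advantage_general (X : WSC V d) (γ : ℝ) (hexp : X.toWFam.isExpander γ)
    (k : ℕ) (hk : k ≤ d) (f : Finset V → ℝ)
    (hf : X.toWFam.inner (k + 1) f (fun _ => 1) = 0) :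
    X.toWFam.norm2 1 (X.toWFam.sAdjIter 1 k f) ≤
      (1 - ((k : ℝ) / ((k : ℝ) + 1)) * (1 - γ)) * X.toWFam.norm2 (k + 1) f := by
  set h := X.sAdjIter 1 k f
  have hh : X.inner 1 h (fun _ => 1) = 0 := by rwa [X.inner_sAdjIter_one, add_comm]
  have hCS : X.norm2 1 h ^ 2 ≤ X.norm2 (1 + k) (sDiffIter 1 k h) * X.norm2 (1 + k) f := by
    have := X.inner_sq_le_norm2_mul_norm2 (1 + k) (sDiffIter 1 k h) f
    rwa [X.inner_sDiffIter] at this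
  have hD := WSC.norm2_sDiffIter_one_le hexp hk hh
  have hγ := WSC.one_add_mul_nonneg_of_isExpander hexp hk
  rw [add_comm 1 k] at hCS hD
  have hF := X.norm2_nonneg (k + 1) f
  have hcoef : 1 - (k : ℝ) / (k + 1) * (1 - γ) = (1 + k * γ) / (k + 1) := by field_simp; ring
  rw [hcoef, div_mul_eq_mul_div, le_div_iff₀ (by positivity)]
  rcases (X.norm2_nonneg 1 h).eq_or_lt with hN | hN
  · rw [← hN, zero_mul]
    exact mul_nonneg hγ hF
  · nlinarith [mul_le_mul_of_nonneg_right hD hF]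

/-- If the 1-skeleton of `(X, w)` is a `γ`-spectral expander,
`1 ≤ k ≤ d`, and `f ∈ C^k(X;ℝ)` satisfies `⟨f, 1⟩ = 0` (a `0`-level cochain
with respect to localization), then
`‖d_0^* ⋯ d_{k-1}^* f‖² ≤ (1 - (k/(k+1))(1-γ)) ‖f‖²`. -/
theorem advantage (X : WSC V d) (γ : ℝ) (hexp : X.toWFam.isExpander γ)
    (k : ℕ) (hk1 : 1 ≤ k) (hk : k ≤ d) (f : Finset V → ℝ)
    (hf : X.toWFam.inner (k + 1) f (fun _ => 1) = 0) :
    X.toWFam.norm2 1 (X.toWFam.sAdjIter 1 k f) ≤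
      (1 - ((k : ℝ) / ((k : ℝ) + 1)) * (1 - γ)) * X.toWFam.norm2 (k + 1) f :=
  advantage_general X γ hexp k hk f hf

end

end HDRW
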